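/- (A priori estimate) Let n ≥ 2, N = n(n+1)/2, let Q̂_1, ..., Q̂_N be an orthonormal basis (for the Frobenius inner product) of the space of real symmetric n×n matrices, and let ε > 0 with ε ≤ 1/N. Define f(x) = Σ_{α,β=1}^N x_α x_β ‖[Q̂_α, Q̂_β]‖² − (Σ_{α=1}^N x_α)² and Δ_ε = { x ∈ ℝ^N : Σ_α x_α = 1 and x_α ≥ ε for all α }. If f(x) ≤ 0 for every x ∈ Δ_ε, then f(x) < 0 for every x ∈ Δ_ε. -/

import Mathlib

/-!
Write `c αβ = ‖[Q̂_α, Q̂_β]‖²` and `g x = ∑ c αβ x_α x_β`, so that `f = g - 1` on `Δ_ε`. If `f ≤ 0`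
on `Δ_ε` and `f x = 0`, then `x` maximises `g` on `Δ_ε`, and moving mass away from a largest
coordinate `x_b` shows `(c x)_γ ≤ (c x)_b` whenever `x_γ > ε`. Hence
`1 = g x ≤ (1 - Nε) (c x)_b + ε ∑_γ (c x)_γ ≤ (1 - Nε) + ε n < 1`, using two estimates for an
orthonormal basis of symmetric matrices, both proved after diagonalising one basis element:
the column sums `∑_γ c γβ` are at most `n`, and `(c x)_b ≤ 1` when `x_b` is maximal. The latter is
a bound on the top eigenvalue of the Laplacian of the graph with weights
`w_ij = ∑_γ x_γ (Q̂_γ)_ij²` (`i ≠ j`), whose degrees satisfy `d_i + d_j ≤ 1/2`.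
-/

open Matrix BigOperators

def frobSq {n : ℕ} (A : Matrix (Fin n) (Fin n) ℝ) : ℝ := ∑ i, ∑ j, (A i j) ^ 2

def frobInner {n : ℕ} (A B : Matrix (Fin n) (Fin n) ℝ) : ℝ := ∑ i, ∑ j, A i j * B i j

def matComm {n : ℕ} (A B : Matrix (Fin n) (Fin n) ℝ) : Matrix (Fin n) (Fin n) ℝ :=
  A * B - B * A

open Finset Filter Topology

section Frobenius

variable {n : ℕ}

lemma frobSq_eq_frobInner (A : Matrix (Fin n) (Fin n) ℝ) : frobSq A = frobInner A A := by
  simp only [frobSq, frobInner, sq]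

lemma frobInner_comm (A B : Matrix (Fin n) (Fin n) ℝ) : frobInner A B = frobInner B A := by
  simp only [frobInner, mul_comm]

lemma frobInner_eq_trace (A B : Matrix (Fin n) (Fin n) ℝ) : frobInner A B = trace (Aᵀ * B) := by
  simp only [frobInner, trace, Matrix.diag, mul_apply, transpose_apply]
  exact sum_comm

lemma frobInner_sum_smul_left {ι : Type*} [Fintype ι] (c : ι → ℝ)
    (A : ι → Matrix (Fin n) (Fin n) ℝ) (B : Matrix (Fin n) (Fin n) ℝ) :
    frobInner (∑ α, c α • A α) B = ∑ α, c α * frobInner (A α) B := by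
  simp only [frobInner_eq_trace, transpose_sum, transpose_smul, sum_mul, smul_mul, trace_sum,
    trace_smul, smul_eq_mul]

lemma frobInner_conj {U : Matrix (Fin n) (Fin n) ℝ} (hU : U ∈ orthogonalGroup (Fin n) ℝ)
    (A B : Matrix (Fin n) (Fin n) ℝ) : frobInner (Uᵀ * A * U) (Uᵀ * B * U) = frobInner A B := by
  have h := (mem_orthogonalGroup_iff (Fin n) ℝ).mp hU
  rw [frobInner_eq_trace, frobInner_eq_trace, transpose_mul, transpose_mul, transpose_transpose,
    show Uᵀ * (Aᵀ * U) * (Uᵀ * B * U) = Uᵀ * (Aᵀ * (U * Uᵀ) * B * U) by noncomm_ring, h, mul_one,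
    trace_mul_comm, mul_assoc, h, mul_one]

lemma frobSq_conj {U : Matrix (Fin n) (Fin n) ℝ} (hU : U ∈ orthogonalGroup (Fin n) ℝ)
    (A : Matrix (Fin n) (Fin n) ℝ) : frobSq (Uᵀ * A * U) = frobSq A := by
  rw [frobSq_eq_frobInner, frobSq_eq_frobInner, frobInner_conj hU]

lemma matComm_conj {U : Matrix (Fin n) (Fin n) ℝ} (hU : U ∈ orthogonalGroup (Fin n) ℝ)
    (A B : Matrix (Fin n) (Fin n) ℝ) :
    matComm (Uᵀ * A * U) (Uᵀ * B * U) = Uᵀ * matComm A B * U := by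
  have h := (mem_orthogonalGroup_iff (Fin n) ℝ).mp hU
  simp only [matComm, mul_sub, sub_mul]
  rw [show Uᵀ * A * U * (Uᵀ * B * U) = Uᵀ * A * (U * Uᵀ) * B * U by noncomm_ring,
    show Uᵀ * B * U * (Uᵀ * A * U) = Uᵀ * B * (U * Uᵀ) * A * U by noncomm_ring, h]
  noncomm_ring

lemma frobSq_matComm_comm (A B : Matrix (Fin n) (Fin n) ℝ) :
    frobSq (matComm A B) = frobSq (matComm B A) := by
  rw [show matComm A B = -matComm B A by simp [matComm]]
  simp [frobSq]

lemma frobSq_diagonal (a : Fin n → ℝ) : frobSq (diagonal a) = ∑ i, a i ^ 2 := by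
  simp [frobSq, diagonal_apply, ite_pow]

lemma frobSq_matComm_diagonal (a : Fin n → ℝ) (C : Matrix (Fin n) (Fin n) ℝ) :
    frobSq (matComm (diagonal a) C) = ∑ i, ∑ j, (a i - a j) ^ 2 * C i j ^ 2 := by
  simp only [frobSq, matComm, Matrix.sub_apply, diagonal_mul, mul_diagonal]
  congr! 2 with i _ j _
  ring

lemma exists_orthogonal_conj_eq_diagonal {B : Matrix (Fin n) (Fin n) ℝ} (hB : Bᵀ = B) :
    ∃ U ∈ orthogonalGroup (Fin n) ℝ, ∃ a : Fin n → ℝ, Uᵀ * B * U = diagonal a := by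
  have hH : B.IsHermitian := isHermitian_iff_isSymm.mpr hB
  refine ⟨hH.eigenvectorUnitary, hH.eigenvectorUnitary.2, hH.eigenvalues, ?_⟩
  simpa [Unitary.conjStarAlgAut_star_apply, star_eq_conjTranspose,
    conjTranspose_eq_transpose_of_trivial] using hH.conjStarAlgAut_star_eigenvectorUnitary

end Frobenius

section WeightedGraph

variable {ι : Type*} [Fintype ι] {w : ι → ι → ℝ}

lemma sum_sum_sub_sq (a : ι → ℝ) :
    ∑ i, ∑ j, (a i - a j) ^ 2 = 2 * (Fintype.card ι * ∑ i, a i ^ 2 - (∑ i, a i) ^ 2) := by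
  simp only [sub_sq, sum_add_distrib, sum_sub_distrib, ← mul_sum, ← sum_mul, sum_const,
    card_univ, nsmul_eq_mul]
  ring

lemma two_mul_sum_rowSum_le [DecidableEq ι] (hsymm : ∀ i j, w i j = w j i)
    (hnn : ∀ i j, 0 ≤ w i j) (S : Finset ι) :
    2 * ∑ p ∈ S, ∑ q, w p q ≤ ∑ p, ∑ q, w p q + ∑ p ∈ S, ∑ q ∈ S, w p q := by
  have hincl := sum_union_inter (s₁ := S ×ˢ univ) (s₂ := univ ×ˢ S) (f := fun pq => w pq.1 pq.2)
  have hsub : ∑ pq ∈ S ×ˢ univ ∪ univ ×ˢ S, w pq.1 pq.2 ≤ ∑ pq : ι × ι, w pq.1 pq.2 :=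
    sum_le_sum_of_subset_of_nonneg (subset_univ _) fun pq _ _ => hnn _ _
  have hcols : ∑ p, ∑ q ∈ S, w p q = ∑ p ∈ S, ∑ q, w p q := by
    rw [sum_comm]
    simp only [hsymm _ _]
  rw [product_inter_product, inter_univ, univ_inter, sum_product, sum_product, sum_product,
    hcols] at hincl
  rw [Fintype.sum_prod_type] at hsub
  linarith

-- Anderson–Morley: the Laplacian's top eigenvalue is at most `max_{i ≠ j} (d_i + d_j)`.
theorem sum_mul_sub_sq_le (hsymm : ∀ i j, w i j = w j i) (hnn : ∀ i j, 0 ≤ w i j) {lam : ℝ}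
    (hlam : 0 ≤ lam) (hrow : ∀ i j, i ≠ j → ∑ k, w i k + ∑ k, w j k ≤ lam) (a : ι → ℝ) :
    ∑ i, ∑ j, w i j * (a i - a j) ^ 2 ≤ 2 * lam * ∑ i, a i ^ 2 := by
  set Q := ∑ i, ∑ j, w i j * (a i - a j) ^ 2
  set z : ι → ℝ := fun i => ∑ j, w i j * (a i - a j)
  have hQ0 : 0 ≤ Q := sum_nonneg fun i _ => sum_nonneg fun j _ => mul_nonneg (hnn i j) (sq_nonneg _)
  have hQz : Q = 2 * ∑ i, a i * z i := by
    have hswap : ∑ i, ∑ j, w i j * (a i - a j) * a j = -∑ i, ∑ j, w i j * (a i - a j) * a i := by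
      rw [sum_comm, ← sum_neg_distrib]
      refine sum_congr rfl fun i _ => ?_
      rw [← sum_neg_distrib]
      refine sum_congr rfl fun j _ => ?_
      rw [hsymm]
      ring
    have hsplit :
        Q = ∑ i, ∑ j, w i j * (a i - a j) * a i - ∑ i, ∑ j, w i j * (a i - a j) * a j := by
      simp only [Q, ← sum_sub_distrib]
      congr! 2
      ring
    rw [hsplit, hswap, sub_neg_eq_add, ← two_mul]
    simp only [z, mul_sum]
    congr! 3
    ring
  have hz : ∀ i, z i ^ 2 ≤ (∑ k, w i k) * ∑ j, w i j * (a i - a j) ^ 2 := fun i =>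
    sum_sq_le_sum_mul_sum_of_sq_le_mul _ (fun j _ => hnn i j)
      (fun j _ => mul_nonneg (hnn i j) (sq_nonneg _)) (fun j _ => le_of_eq (by ring))
  have hdeg : ∑ i, (∑ k, w i k) * ∑ j, w i j * (a i - a j) ^ 2 ≤ lam / 2 * Q := by
    set t : ι → ι → ℝ := fun i j => w i j * (a i - a j) ^ 2
    have hsym : ∑ i, (∑ k, w i k) * ∑ j, t i j = ∑ i, ∑ j, (∑ k, w j k) * t i j := by
      rw [sum_comm]
      simp only [mul_sum, t]
      congr! 3 with j _ i _
      rw [hsymm]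
      ring
    have hpair : ∀ i j, ((∑ k, w i k) + ∑ k, w j k) * t i j ≤ lam * t i j := by
      intro i j
      by_cases hij : i = j
      · simp [t, hij]
      · exact mul_le_mul_of_nonneg_right (hrow i j hij) (mul_nonneg (hnn i j) (sq_nonneg _))
    have h2 := sum_le_sum fun i (_ : i ∈ univ) => sum_le_sum fun j (_ : j ∈ univ) => hpair i j
    simp only [add_mul, sum_add_distrib, ← mul_sum, ← hsym] at h2
    linarith
  have hQsq : Q * Q ≤ 2 * lam * (∑ i, a i ^ 2) * Q := by
    calc Q * Q = 4 * (∑ i, a i * z i) ^ 2 := by rw [hQz]; ring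
      _ ≤ 4 * ((∑ i, a i ^ 2) * ∑ i, z i ^ 2) := by gcongr; exact sum_mul_sq_le_sq_mul_sq _ _ _
      _ ≤ 4 * ((∑ i, a i ^ 2) * (lam / 2 * Q)) := by
        gcongr; exact (sum_le_sum fun i _ => hz i).trans hdeg
      _ = 2 * lam * (∑ i, a i ^ 2) * Q := by ring
  rcases hQ0.eq_or_lt with hQ | hQ
  · rw [← hQ]; positivity
  · exact le_of_mul_le_mul_right hQsq hQ

end WeightedGraph

structure IsSymmOrthonormalBasis {n : ℕ} {ι : Type*} [Fintype ι] [DecidableEq ι]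
    (Q : ι → Matrix (Fin n) (Fin n) ℝ) : Prop where
  transpose_eq : ∀ α, (Q α)ᵀ = Q α
  frobInner_eq : ∀ α β, frobInner (Q α) (Q β) = if α = β then 1 else 0
  exists_eq_sum : ∀ A : Matrix (Fin n) (Fin n) ℝ, Aᵀ = A → ∃ c : ι → ℝ, A = ∑ α, c α • Q α

namespace IsSymmOrthonormalBasis

variable {n : ℕ} {ι : Type*} [Fintype ι] [DecidableEq ι] {Q : ι → Matrix (Fin n) (Fin n) ℝ}

lemma frobSq_eq_one (hQ : IsSymmOrthonormalBasis Q) (α : ι) : frobSq (Q α) = 1 := by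
  rw [frobSq_eq_frobInner, hQ.frobInner_eq, if_pos rfl]

lemma sum_frobInner_sq (hQ : IsSymmOrthonormalBasis Q) {M : Matrix (Fin n) (Fin n) ℝ}
    (hM : Mᵀ = M) : ∑ α, frobInner M (Q α) ^ 2 = frobSq M := by
  obtain ⟨c, rfl⟩ := hQ.exists_eq_sum M hM
  have hcoef : ∀ β, frobInner (∑ α, c α • Q α) (Q β) = c β := fun β => by
    simp [frobInner_sum_smul_left, hQ.frobInner_eq]
  simp only [frobSq_eq_frobInner, hcoef]
  conv_rhs => rw [frobInner_sum_smul_left]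
  simp only [frobInner_comm (Q _), hcoef, sq]

lemma sum_sq_apply_of_ne (hQ : IsSymmOrthonormalBasis Q) {i j : Fin n} (hij : i ≠ j) :
    ∑ α, Q α i j ^ 2 = 1 / 2 := by
  set M : Matrix (Fin n) (Fin n) ℝ := single i j 1 + single j i 1
  have hM : Mᵀ = M := by simp [M, add_comm]
  have hinner : ∀ X, frobInner M X = X i j + X j i := fun X => by
    simp [M, frobInner, single_apply, add_mul, sum_add_distrib, ite_and]
  have hnorm : frobSq M = 2 := by
    rw [frobSq_eq_frobInner, hinner]
    simp [M, hij, hij.symm]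
    norm_num
  have hsymm : ∀ α, Q α j i = Q α i j := fun α => by
    rw [← transpose_apply (Q α) i j, hQ.transpose_eq]
  have h := hQ.sum_frobInner_sq hM
  simp only [hinner, hsymm, hnorm, ← two_mul, mul_pow, ← mul_sum] at h
  linarith

lemma conj (hQ : IsSymmOrthonormalBasis Q) {U : Matrix (Fin n) (Fin n) ℝ}
    (hU : U ∈ orthogonalGroup (Fin n) ℝ) : IsSymmOrthonormalBasis fun α => Uᵀ * Q α * U where
  transpose_eq α := by
    rw [transpose_mul, transpose_mul, transpose_transpose, hQ.transpose_eq, mul_assoc]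
  frobInner_eq α β := by rw [frobInner_conj hU, hQ.frobInner_eq]
  exists_eq_sum A hA := by
    have h := (mem_orthogonalGroup_iff' (Fin n) ℝ).mp hU
    obtain ⟨c, hc⟩ := hQ.exists_eq_sum (U * A * Uᵀ) (by
      rw [transpose_mul, transpose_mul, transpose_transpose, hA, mul_assoc])
    refine ⟨c, ?_⟩
    calc A = Uᵀ * (U * A * Uᵀ) * U := by
          rw [show Uᵀ * (U * A * Uᵀ) * U = (Uᵀ * U) * A * (Uᵀ * U) by noncomm_ring, h, one_mul,
            mul_one]
      _ = ∑ α, c α • (Uᵀ * Q α * U) := by simp [hc, mul_sum, sum_mul]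

lemma exists_diagonal (hQ : IsSymmOrthonormalBasis Q) (b : ι) :
    ∃ C : ι → Matrix (Fin n) (Fin n) ℝ, IsSymmOrthonormalBasis C ∧
      (∃ a : Fin n → ℝ, C b = diagonal a) ∧
      ∀ α β, frobSq (matComm (C α) (C β)) = frobSq (matComm (Q α) (Q β)) := by
  obtain ⟨U, hU, a, ha⟩ := exists_orthogonal_conj_eq_diagonal (hQ.transpose_eq b)
  exact ⟨_, hQ.conj hU, ⟨a, ha⟩, fun α β => by rw [matComm_conj hU, frobSq_conj hU]⟩

end IsSymmOrthonormalBasis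

def offDiagWeight {n : ℕ} {ι : Type*} [Fintype ι] (C : ι → Matrix (Fin n) (Fin n) ℝ)
    (x : ι → ℝ) (i j : Fin n) : ℝ :=
  if i = j then 0 else ∑ γ, x γ * C γ i j ^ 2

lemma offDiagWeight_nonneg {n : ℕ} {ι : Type*} [Fintype ι] {C : ι → Matrix (Fin n) (Fin n) ℝ}
    {x : ι → ℝ} (hx0 : ∀ γ, 0 ≤ x γ) (i j : Fin n) :
    0 ≤ offDiagWeight C x i j := by
  unfold offDiagWeight
  split_ifs
  exacts [le_rfl, sum_nonneg fun γ _ => mul_nonneg (hx0 γ) (sq_nonneg _)]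

namespace IsSymmOrthonormalBasis

variable {n : ℕ} {ι : Type*} [Fintype ι] [DecidableEq ι] {C : ι → Matrix (Fin n) (Fin n) ℝ}

lemma sum_sq_eq_one_of_eq_diagonal (hC : IsSymmOrthonormalBasis C) {b : ι} {a : Fin n → ℝ}
    (hb : C b = diagonal a) : ∑ i, a i ^ 2 = 1 := by
  rw [← frobSq_diagonal, ← hb, hC.frobSq_eq_one]

lemma sum_frobSq_matComm_diagonal_le (hC : IsSymmOrthonormalBasis C) (a : Fin n → ℝ) :
    ∑ γ, frobSq (matComm (diagonal a) (C γ)) ≤ n * ∑ i, a i ^ 2 := by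
  have hpair : ∀ i j, (a i - a j) ^ 2 * ∑ γ, C γ i j ^ 2 = 1 / 2 * (a i - a j) ^ 2 := by
    intro i j
    by_cases hij : i = j
    · simp [hij]
    · rw [hC.sum_sq_apply_of_ne hij]
      ring
  calc ∑ γ, frobSq (matComm (diagonal a) (C γ))
      = ∑ i, ∑ j, (a i - a j) ^ 2 * ∑ γ, C γ i j ^ 2 := by
        simp only [frobSq_matComm_diagonal, mul_sum]
        rw [sum_comm]
        exact sum_congr rfl fun i _ => sum_comm
    _ = n * ∑ i, a i ^ 2 - (∑ i, a i) ^ 2 := by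
        simp only [hpair, ← mul_sum, sum_sum_sub_sq, Fintype.card_fin]
        ring
    _ ≤ n * ∑ i, a i ^ 2 := sub_le_self _ (sq_nonneg _)

lemma sum_frobSq_matComm_le (hC : IsSymmOrthonormalBasis C) (β : ι) :
    ∑ γ, frobSq (matComm (C γ) (C β)) ≤ n := by
  obtain ⟨D, hD, ⟨a, ha⟩, hcomm⟩ := hC.exists_diagonal β
  simpa only [← hcomm, frobSq_matComm_comm (D _), ha, hD.sum_sq_eq_one_of_eq_diagonal ha,
    mul_one] using
    hD.sum_frobSq_matComm_diagonal_le a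

lemma offDiagWeight_comm (hC : IsSymmOrthonormalBasis C) (x : ι → ℝ) (i j : Fin n) :
    offDiagWeight C x i j = offDiagWeight C x j i := by
  have hsymm : ∀ γ, C γ j i = C γ i j := fun γ => by
    rw [← transpose_apply (C γ) i j, hC.transpose_eq]
  simp only [offDiagWeight, eq_comm (a := i), hsymm]

lemma sum_offDiagWeight_le (hC : IsSymmOrthonormalBasis C) {b : ι} {a : Fin n → ℝ}
    (hb : C b = diagonal a) {x : ι → ℝ} (hx0 : ∀ γ, 0 ≤ x γ) (hx1 : ∑ γ, x γ = 1) :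
    ∑ p, ∑ q, offDiagWeight C x p q ≤ 1 - x b := by
  have hw : ∀ p q, offDiagWeight C x p q =
      ∑ γ, x γ * C γ p q ^ 2 - if p = q then ∑ γ, x γ * C γ p q ^ 2 else 0 := by
    intro p q
    unfold offDiagWeight
    split_ifs <;> simp
  have htotal : ∑ p, ∑ q, ∑ γ, x γ * C γ p q ^ 2 = 1 := by
    have hγ : ∀ γ, ∑ p, ∑ q, x γ * C γ p q ^ 2 = x γ := fun γ => by
      simp only [← mul_sum]
      rw [show ∑ p, ∑ q, C γ p q ^ 2 = frobSq (C γ) from rfl, hC.frobSq_eq_one, mul_one]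
    calc ∑ p, ∑ q, ∑ γ, x γ * C γ p q ^ 2 = ∑ p, ∑ γ, ∑ q, x γ * C γ p q ^ 2 :=
          sum_congr rfl fun p _ => sum_comm
      _ = ∑ γ, x γ := by rw [sum_comm]; exact sum_congr rfl fun γ _ => hγ γ
      _ = 1 := hx1
  have hdiag : x b ≤ ∑ p, ∑ γ, x γ * C γ p p ^ 2 := by
    calc x b = ∑ p, x b * C b p p ^ 2 := by
          simp [hb, ← mul_sum, hC.sum_sq_eq_one_of_eq_diagonal hb]
      _ ≤ ∑ p, ∑ γ, x γ * C γ p p ^ 2 := sum_le_sum fun p _ =>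
          single_le_sum (f := fun γ => x γ * C γ p p ^ 2)
            (fun γ _ => mul_nonneg (hx0 γ) (sq_nonneg _)) (mem_univ b)
  simp only [hw, sum_sub_distrib, sum_ite_eq, mem_univ, if_true, htotal]
  linarith

lemma offDiagWeight_le (hC : IsSymmOrthonormalBasis C) {x : ι → ℝ} {b : ι}
    (hx0 : ∀ γ, 0 ≤ x γ) (hmax : ∀ γ, x γ ≤ x b) (i j : Fin n) :
    offDiagWeight C x i j ≤ x b / 2 := by
  unfold offDiagWeight
  split_ifs with hij
  · linarith [hx0 b]
  · calc ∑ γ, x γ * C γ i j ^ 2 ≤ ∑ γ, x b * C γ i j ^ 2 :=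
          sum_le_sum fun γ _ => mul_le_mul_of_nonneg_right (hmax γ) (sq_nonneg _)
      _ = x b / 2 := by rw [← mul_sum, hC.sum_sq_apply_of_ne hij, mul_one_div]

-- The total weight `1 - x b` is shared by the two rows; the edge `{i, j}` adds at most `x b / 2`.
lemma rowSum_add_rowSum_offDiagWeight_le (hC : IsSymmOrthonormalBasis C) {b : ι}
    {a : Fin n → ℝ} (hb : C b = diagonal a) {x : ι → ℝ} (hx0 : ∀ γ, 0 ≤ x γ)
    (hx1 : ∑ γ, x γ = 1) (hmax : ∀ γ, x γ ≤ x b) {i j : Fin n} (hij : i ≠ j) :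
    ∑ k, offDiagWeight C x i k + ∑ k, offDiagWeight C x j k ≤ 1 / 2 := by
  have hcount := two_mul_sum_rowSum_le (hC.offDiagWeight_comm x)
    (offDiagWeight_nonneg hx0) {i, j}
  have hdiag : ∀ k, offDiagWeight C x k k = 0 := fun k => if_pos rfl
  simp only [sum_pair hij, hdiag, hC.offDiagWeight_comm x j i] at hcount
  linarith [hC.sum_offDiagWeight_le hb hx0 hx1, hC.offDiagWeight_le hx0 hmax i j]

lemma sum_mul_frobSq_matComm_diagonal_le_one (hC : IsSymmOrthonormalBasis C) {b : ι}
    {a : Fin n → ℝ} (hb : C b = diagonal a) {x : ι → ℝ} (hx0 : ∀ γ, 0 ≤ x γ)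
    (hx1 : ∑ γ, x γ = 1) (hmax : ∀ γ, x γ ≤ x b) :
    ∑ γ, x γ * frobSq (matComm (C b) (C γ)) ≤ 1 := by
  have hw : ∑ γ, x γ * frobSq (matComm (C b) (C γ)) =
      ∑ i, ∑ j, offDiagWeight C x i j * (a i - a j) ^ 2 := by
    simp only [hb, frobSq_matComm_diagonal, mul_sum]
    rw [sum_comm]
    refine sum_congr rfl fun i _ => ?_
    rw [sum_comm]
    refine sum_congr rfl fun j _ => ?_
    unfold offDiagWeight
    split_ifs with hij
    · simp [hij]
    · rw [sum_mul]
      exact sum_congr rfl fun γ _ => by ring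
  calc ∑ γ, x γ * frobSq (matComm (C b) (C γ))
      = ∑ i, ∑ j, offDiagWeight C x i j * (a i - a j) ^ 2 := hw
    _ ≤ 2 * (1 / 2) * ∑ i, a i ^ 2 :=
        sum_mul_sub_sq_le (hC.offDiagWeight_comm x) (offDiagWeight_nonneg hx0) (by norm_num)
          (fun i j hij => hC.rowSum_add_rowSum_offDiagWeight_le hb hx0 hx1 hmax hij) a
    _ = 1 := by rw [hC.sum_sq_eq_one_of_eq_diagonal hb]; norm_num

lemma sum_mul_frobSq_matComm_le_one (hC : IsSymmOrthonormalBasis C) {x : ι → ℝ}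
    (hx0 : ∀ γ, 0 ≤ x γ) (hx1 : ∑ γ, x γ = 1) {b : ι} (hmax : ∀ γ, x γ ≤ x b) :
    ∑ γ, x γ * frobSq (matComm (C b) (C γ)) ≤ 1 := by
  obtain ⟨D, hD, ⟨a, ha⟩, hcomm⟩ := hC.exists_diagonal b
  simpa only [hcomm] using hD.sum_mul_frobSq_matComm_diagonal_le_one ha hx0 hx1 hmax

end IsSymmOrthonormalBasis

lemma nonpos_of_forall_mul_add_mul_sq_nonpos {a b s : ℝ} (hs : 0 < s)
    (h : ∀ τ, 0 < τ → τ ≤ s → a * τ + b * τ ^ 2 ≤ 0) : a ≤ 0 := by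
  have hlim : Tendsto (fun τ => a + b * τ) (𝓝[>] 0) (𝓝 a) := by
    have : Tendsto (fun τ => a + b * τ) (𝓝 0) (𝓝 (a + b * 0)) :=
      (continuous_const.add (continuous_const.mul continuous_id)).tendsto 0
    simpa using this.mono_left nhdsWithin_le_nhds
  refine le_of_tendsto hlim ?_
  filter_upwards [Ioc_mem_nhdsGT hs] with τ ⟨hτ0, hτs⟩
  have := h τ hτ0 hτs
  nlinarith

section Simplex

variable {ι : Type*} [Fintype ι] [DecidableEq ι] {C : Matrix ι ι ℝ}

-- First-order optimality: moving mass `τ` from `b` to `γ` stays in the truncated simplex.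
lemma mulVec_apply_le_of_isMaxOn (hC : C.IsSymm) {ε : ℝ} {x : ι → ℝ}
    (hmax : IsMaxOn (fun y => y ⬝ᵥ C *ᵥ y) {y | ∑ α, y α = 1 ∧ ∀ α, ε ≤ y α} x)
    (hx : ∑ α, x α = 1 ∧ ∀ α, ε ≤ x α) {b : ι} (hb : ε < x b) (γ : ι) :
    (C *ᵥ x) γ ≤ (C *ᵥ x) b := by
  set v : ι → ℝ := Pi.single γ 1 - Pi.single b 1
  have hvx : ∀ w : ι → ℝ, v ⬝ᵥ w = w γ - w b := fun w => by
    simp [v, sub_dotProduct]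
  have hexp : ∀ τ : ℝ, (x + τ • v) ⬝ᵥ C *ᵥ (x + τ • v) =
      x ⬝ᵥ C *ᵥ x + 2 * ((C *ᵥ x) γ - (C *ᵥ x) b) * τ + (v ⬝ᵥ C *ᵥ v) * τ ^ 2 := fun τ => by
    have hswap : x ⬝ᵥ C *ᵥ v = v ⬝ᵥ C *ᵥ x := by
      rw [dotProduct_mulVec, dotProduct_comm, ← vecMul_transpose, hC.eq]
    simp only [mulVec_add, mulVec_smul, add_dotProduct, dotProduct_add, smul_dotProduct,
      dotProduct_smul, hswap, hvx, smul_eq_mul]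
    ring
  have h := nonpos_of_forall_mul_add_mul_sq_nonpos (a := 2 * ((C *ᵥ x) γ - (C *ᵥ x) b))
    (b := v ⬝ᵥ C *ᵥ v) (sub_pos.2 hb) fun τ hτ0 hτs => by
    have hsum : ∑ α, (x + τ • v) α = 1 := by simp [v, sum_add_distrib, ← mul_sum, hx.1]
    have hlow : ∀ δ, ε ≤ (x + τ • v) δ := fun δ => by
      have := hx.2 δ
      simp only [v, Pi.add_apply, Pi.smul_apply, Pi.sub_apply, Pi.single_apply, smul_eq_mul]
      split_ifs <;> subst_vars <;> linarith
    have hy := isMaxOn_iff.mp hmax (x + τ • v) ⟨hsum, hlow⟩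
    rw [hexp] at hy
    linarith
  linarith

theorem dotProduct_mulVec_lt_one (hC : C.IsSymm) {m ε : ℝ} (hm : m < Fintype.card ι)
    (hε : 0 < ε) (hεcard : Fintype.card ι * ε ≤ 1) (hcol : ∀ β, ∑ γ, C γ β ≤ m)
    (hpeak : ∀ x : ι → ℝ, (∀ α, 0 ≤ x α) → ∑ α, x α = 1 → ∀ b, (∀ α, x α ≤ x b) →
      (C *ᵥ x) b ≤ 1)
    (hle : ∀ y : ι → ℝ, (∑ α, y α = 1 ∧ ∀ α, ε ≤ y α) → y ⬝ᵥ C *ᵥ y ≤ 1)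
    {x : ι → ℝ} (hx : ∑ α, x α = 1 ∧ ∀ α, ε ≤ x α) : x ⬝ᵥ C *ᵥ x < 1 := by
  by_contra! hge
  have hx0 : ∀ α, 0 ≤ x α := fun α => hε.le.trans (hx.2 α)
  obtain ⟨b, -, hb⟩ := exists_max_image univ x
    (nonempty_of_sum_ne_zero (by rw [hx.1]; exact one_ne_zero))
  have hdb : (C *ᵥ x) b ≤ 1 := hpeak x hx0 hx.1 b fun α => hb α (mem_univ α)
  have hd : ∀ γ, (x γ - ε) * (C *ᵥ x) γ ≤ (x γ - ε) * (C *ᵥ x) b := by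
    intro γ
    rcases (hx.2 γ).eq_or_lt with h | h
    · simp [← h]
    · exact mul_le_mul_of_nonneg_left
        (mulVec_apply_le_of_isMaxOn hC (isMaxOn_iff.mpr fun y hy => (hle y hy).trans hge) hx
          (h.trans_le (hb γ (mem_univ γ))) γ) (sub_nonneg.2 (hx.2 γ))
  have hsum : ∑ γ, (C *ᵥ x) γ ≤ m := by
    calc ∑ γ, (C *ᵥ x) γ = ∑ β, (∑ γ, C γ β) * x β := by
          simp only [mulVec, dotProduct, sum_mul]
          exact sum_comm
      _ ≤ ∑ β, m * x β := sum_le_sum fun β _ => mul_le_mul_of_nonneg_right (hcol β) (hx0 β)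
      _ = m := by rw [← mul_sum, hx.1, mul_one]
  have hslack : ∑ γ, (x γ - ε) = 1 - Fintype.card ι * ε := by
    simp [sum_sub_distrib, hx.1]
  refine lt_irrefl (1 : ℝ) ?_
  calc 1 ≤ x ⬝ᵥ C *ᵥ x := hge
    _ = ∑ γ, (x γ - ε) * (C *ᵥ x) γ + ε * ∑ γ, (C *ᵥ x) γ := by
        simp only [dotProduct, mul_sum, ← sum_add_distrib]
        exact sum_congr rfl fun γ _ => by ring
    _ ≤ (1 - Fintype.card ι * ε) * (C *ᵥ x) b + ε * m := by
        rw [← hslack, sum_mul]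
        exact add_le_add (sum_le_sum fun γ _ => hd γ) (mul_le_mul_of_nonneg_left hsum hε.le)
    _ ≤ (1 - Fintype.card ι * ε) * 1 + ε * m := by gcongr
    _ < 1 := by nlinarith

end Simplex

lemma lt_mul_succ_div_two {n : ℕ} (hn : 2 ≤ n) : n < n * (n + 1) / 2 :=
  (Nat.le_div_iff_mul_le two_pos).2 (by nlinarith)

/-- The a priori estimate: if `f_Q ≤ 0` on `Δ_ε` then `f_Q < 0` on `Δ_ε`. -/
theorem ddvv_a_priori_estimate (n : ℕ) (hn : 2 ≤ n)
    (Qhat : Fin (n * (n + 1) / 2) → Matrix (Fin n) (Fin n) ℝ)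
    (hsymm : ∀ α, (Qhat α)ᵀ = Qhat α)
    (horth : ∀ α β, frobInner (Qhat α) (Qhat β) = if α = β then 1 else 0)
    (hspan : ∀ A : Matrix (Fin n) (Fin n) ℝ, Aᵀ = A →
      ∃ c : Fin (n * (n + 1) / 2) → ℝ, A = ∑ α, c α • Qhat α)
    (ε : ℝ) (hε : 0 < ε) (hεN : ε ≤ 1 / (n * (n + 1) / 2 : ℕ))
    (f : (Fin (n * (n + 1) / 2) → ℝ) → ℝ)
    (hf : ∀ x, f x =
      (∑ α, ∑ β, x α * x β * frobSq (matComm (Qhat α) (Qhat β))) - (∑ α, x α) ^ 2)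
    (hneg : ∀ x : Fin (n * (n + 1) / 2) → ℝ,
      (∑ α, x α = 1 ∧ ∀ α, ε ≤ x α) → f x ≤ 0) :
    ∀ x : Fin (n * (n + 1) / 2) → ℝ,
      (∑ α, x α = 1 ∧ ∀ α, ε ≤ x α) → f x < 0 := by
  have hQ : IsSymmOrthonormalBasis Qhat := ⟨hsymm, horth, hspan⟩
  set C : Matrix (Fin (n * (n + 1) / 2)) (Fin (n * (n + 1) / 2)) ℝ :=
    of fun α β => frobSq (matComm (Qhat α) (Qhat β))
  have hC : C.IsSymm := IsSymm.ext fun α β => frobSq_matComm_comm _ _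
  have hform : ∀ y, f y = y ⬝ᵥ C *ᵥ y - (∑ α, y α) ^ 2 := fun y => by
    simp only [hf, C, dotProduct, mulVec, of_apply, mul_sum]
    congr! 3
    ring
  have hN : (0 : ℝ) < (n * (n + 1) / 2 : ℕ) := by
    exact_mod_cast (Nat.zero_lt_two.trans_le hn).trans (lt_mul_succ_div_two hn)
  intro x hx
  have key := dotProduct_mulVec_lt_one hC (m := n) (by simpa using lt_mul_succ_div_two hn) hε
    (by simpa [← le_div_iff₀' hN] using hεN) (fun β => hQ.sum_frobSq_matComm_le β)
    (fun y hy0 hy1 b hmax => by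
      simpa [C, mulVec, dotProduct, mul_comm] using hQ.sum_mul_frobSq_matComm_le_one hy0 hy1 hmax)
    (fun y hy => by simpa [hform, hy.1] using hneg y hy) hx
  rw [hform, hx.1]
  linarith
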